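/- Let G = (V,E) be a finite connected graph that admits a tame generalized cutset C (one with at most one type-II member) with valence Στ, gap r ≥ 2, and witness partition H. Then for every integer n with Στ < n < Στ + r, there exists a common additive valuation v for n agents such that no connected EF1 allocation of G among the n agents exists (hence no connected EF1-outer allocation exists). -/

import Mathlib

open Finset

variable {V : Type*}

/-- A piece of an allocation: either empty or inducing a connected subgraph. -/
def ConnPiece (G : SimpleGraph V) (S : Finset V) : Prop :=
  S = ∅ ∨ (G.induce (S : Set V)).Connected

/-- A connected allocation: a partition of `V` into `n` pieces, each connected. -/
def IsConnAlloc (G : SimpleGraph V) {n : ℕ} (A : Fin n → Finset V) : Prop :=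
  (∀ x : V, ∃! i, x ∈ A i) ∧ ∀ i, ConnPiece G (A i)

def IsMonotoneVal (v : Finset V → ℝ) : Prop :=
  v ∅ = 0 ∧ (∀ S, 0 ≤ v S) ∧ ∀ S T : Finset V, S ⊆ T → v S ≤ v T

def IsAdditiveVal (v : Finset V → ℝ) : Prop :=
  (∀ S, 0 ≤ v S) ∧ ∀ S : Finset V, v S = ∑ x ∈ S, v {x}

def IsEF1 [DecidableEq V] {n : ℕ} (v : Fin n → Finset V → ℝ) (A : Fin n → Finset V) : Prop :=
  ∀ i j : Fin n, v i (A i) ≥ v i (A j) ∨ ∃ x ∈ A j, v i (A i) ≥ v i ((A j).erase x)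

def IsEF1Outer [DecidableEq V] (G : SimpleGraph V) {n : ℕ}
    (v : Fin n → Finset V → ℝ) (A : Fin n → Finset V) : Prop :=
  ∀ i j : Fin n, v i (A i) ≥ v i (A j) ∨
    ∃ x ∈ A j, ConnPiece G ((A j).erase x) ∧ v i (A i) ≥ v i ((A j).erase x)

/-- A generalized cutset for `G`, with gap `r ≥ 2`. -/
structure GenCutset (G : SimpleGraph V) where
  t : ℕ
  C : Fin t → Finset V
  τ : Fin t → ℕ
  r : ℕ
  r_ge : 2 ≤ r
  H : Fin ((∑ i, τ i) + r) → Finset V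
  C_nonempty : ∀ i, (C i).Nonempty
  C_disjoint : ∀ i j, i ≠ j → Disjoint (C i) (C j)
  C_connected : ∀ i, (G.induce ((C i : Set V))).Connected
  H_nonempty : ∀ j, (H j).Nonempty
  H_disjoint : ∀ j k, j ≠ k → Disjoint (H j) (H k)
  H_partition : ∀ x : V, (∀ i, x ∉ C i) ↔ ∃ j, x ∈ H j
  H_independent : ∀ j k, j ≠ k → ∀ x ∈ H j, ∀ y ∈ H k, ¬ G.Adj x y
  contact_unique : ∀ i j, ∀ x ∈ C i, ∀ y ∈ C i,
      (∃ z ∈ H j, G.Adj x z) → (∃ z ∈ H j, G.Adj y z) → x = y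
  typeI_tau : ∀ i, (C i).card = 1 → τ i = 1
  typeII_indep : ∀ i i', i ≠ i' → 1 < (C i).card → 1 < (C i').card →
      ∀ x ∈ C i, ∀ y ∈ C i', ¬ G.Adj x y
  typeII_contacts : ∀ i, 1 < (C i).card →
      (∃ S : Finset (Fin ((∑ i, τ i) + r)), S.card = 2 * τ i + 1 ∧
        ∀ j, j ∈ S ↔ ∃ x ∈ C i, ∃ z ∈ H j, G.Adj x z) ∧
      (∀ x ∈ C i, ∀ j k, (∃ z ∈ H j, G.Adj x z) → (∃ z ∈ H k, G.Adj x z) → j = k)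

/-- The valence of a generalized cutset. -/
abbrev GenCutset.valence {G : SimpleGraph V} (cs : GenCutset G) : ℕ := ∑ i, cs.τ i

/-- `S` dominates a member of the cutset. -/
def GenCutset.Dominates {G : SimpleGraph V} (cs : GenCutset G)
    (S : Finset V) (i : Fin cs.t) : Prop :=
  ((cs.C i).card = 1 ∧ cs.C i ⊆ S) ∨
  (1 < (cs.C i).card ∧ ∃ x, x ∈ cs.C i ∧ x ∈ S ∧ ∃ y, y ∈ cs.C i ∧ y ∈ S ∧ x ≠ y ∧
    (∃ j, ∃ z ∈ cs.H j, G.Adj x z) ∧ (∃ j, ∃ z ∈ cs.H j, G.Adj y z))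

/-- A generalized cutset is tame if it has at most one type-II member. -/
def GenCutset.Tame {V : Type*} {G : SimpleGraph V} (cs : GenCutset G) : Prop :=
  ∀ i i' : Fin cs.t, 1 < (cs.C i).card → 1 < (cs.C i').card → i = i'

/-!
Give weight 2 to every type-I cut vertex and to one chosen vertex (a representative) of each
part `H j`, weight 1 to every contact vertex of a type-II member, and weight 0 to the rest.
No vertex weighs more than 2, so under EF1 every bundle is worth at most `ℓ + 2`, where `ℓ` is
the least value of a bundle without type-I vertices. A connected bundle avoiding the type-I vertices
that holds two or more representatives must leave the part of each of them through a contact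
vertex, and distinct parts need distinct contact vertices; so it holds at least as many contact
vertices as representatives. If `ℓ ≤ 3`, every bundle then holds at most one representative,
against `n < Στ + r`. If `ℓ ≥ 4`, each of the `n` bundles holds a type-I vertex or two contact
vertices, while tameness bounds the number of contact vertices plus twice the number of type-I
vertices by `2Στ + 1 < 2n`.
-/

theorem IsEF1Outer.isEF1 {V : Type*} [DecidableEq V] {G : SimpleGraph V} {n : ℕ}
    {v : Fin n → Finset V → ℝ} {A : Fin n → Finset V} (h : IsEF1Outer G v A) : IsEF1 v A :=
  fun i j => (h i j).imp_right fun ⟨x, hx, _, hle⟩ => ⟨x, hx, hle⟩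

section Partition

variable {V : Type*} [DecidableEq V] {n : ℕ} {A : Fin n → Finset V}

theorem sum_card_inter_eq_card (hA : ∀ x, ∃! i, x ∈ A i) (W : Finset V) :
    ∑ i, #(A i ∩ W) = #W := by
  rw [← card_biUnion]
  · congr 1
    ext x
    simp only [mem_biUnion, mem_univ, mem_inter, true_and]
    exact ⟨fun ⟨_, _, hx⟩ => hx, fun hx => ⟨_, (hA x).exists.choose_spec, hx⟩⟩
  · intro i _ j _ hij
    exact disjoint_left.mpr fun x hi hj =>
      hij ((hA x).unique (mem_inter.mp hi).1 (mem_inter.mp hj).1)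

theorem card_le_of_forall_card_inter_le_one (hA : ∀ x, ∃! i, x ∈ A i) {W : Finset V}
    (h : ∀ i, #(A i ∩ W) ≤ 1) : #W ≤ n := by
  simpa [sum_card_inter_eq_card hA] using sum_le_card_nsmul univ _ 1 fun i _ => h i

theorem mul_card_le_of_forall_le_card_inter (hA : ∀ x, ∃! i, x ∈ A i) {W : Finset V}
    {F : Finset (Fin n)} {m : ℕ} (h : ∀ i ∈ F, m ≤ #(A i ∩ W)) : m * #F ≤ #W := by
  rw [← sum_card_inter_eq_card hA, mul_comm, ← smul_eq_mul]
  exact (card_nsmul_le_sum F _ m h).trans (sum_le_sum_of_subset (subset_univ F))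

theorem card_filter_not_disjoint_le (hA : ∀ x, ∃! i, x ∈ A i) (T : Finset V) :
    #{i | ¬ Disjoint (A i) T} ≤ #T := by
  apply card_le_card_of_forall_subsingleton (fun i x => x ∈ A i)
  · intro i hi
    obtain ⟨x, hxA, hxT⟩ := not_disjoint_iff.mp (mem_filter.mp hi).2
    exact ⟨x, hxT, hxA⟩
  · intro x _ i hi j hj
    exact (hA x).unique hi.2 hj.2

end Partition

theorem SimpleGraph.Connected.exists_adj_of_induce {V : Type*} {G : SimpleGraph V}
    {S P : Set V} (hS : (G.induce S).Connected) {x y : V} (hxS : x ∈ S) (hx : x ∈ P)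
    (hyS : y ∈ S) (hy : y ∉ P) :
    ∃ a ∈ S, a ∈ P ∧ ∃ b ∈ S, b ∉ P ∧ G.Adj a b := by
  obtain ⟨p⟩ := hS.preconnected ⟨x, hxS⟩ ⟨y, hyS⟩
  obtain ⟨d, -, ha, hb⟩ := p.exists_boundary_dart {u | u.1 ∈ P} hx hy
  exact ⟨_, d.fst.2, ha, _, d.snd.2, hb, d.adj⟩

section WeightedCard

variable {V : Type*} [DecidableEq V] (T R K : Finset V)

def weightedCard (S : Finset V) : ℕ := 2 * #(S ∩ T) + 2 * #(S ∩ R) + #(S ∩ K)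

theorem weightedCard_eq_sum (S : Finset V) :
    weightedCard T R K S = ∑ x ∈ S, weightedCard T R K {x} := by
  have hcard (W : Finset V) : #(S ∩ W) = ∑ x ∈ S, #({x} ∩ W) := by
    rw [← filter_mem_eq_inter, card_filter]
    refine sum_congr rfl fun x _ => ?_
    split_ifs with hx <;> simp [hx]
  simp only [weightedCard, hcard, sum_add_distrib, mul_sum]

theorem isAdditiveVal_weightedCard : IsAdditiveVal fun S => (weightedCard T R K S : ℝ) :=
  ⟨fun _ => Nat.cast_nonneg _, fun S => by
    simpa only [Nat.cast_sum] using
      congrArg (Nat.cast : ℕ → ℝ) (weightedCard_eq_sum T R K S)⟩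

variable {T R K}

theorem weightedCard_singleton_le_two (hTR : Disjoint T R) (hTK : Disjoint T K)
    (hRK : Disjoint R K) (x : V) : weightedCard T R K {x} ≤ 2 := by
  by_cases hT : x ∈ T
  · simp [weightedCard, hT, disjoint_left.mp hTR hT, disjoint_left.mp hTK hT]
  by_cases hR : x ∈ R
  · simp [weightedCard, hT, hR, disjoint_left.mp hRK hR]
  · by_cases hK : x ∈ K <;> simp [weightedCard, hT, hR, hK]

theorem weightedCard_le_add_two_of_isEF1 {n : ℕ} {A : Fin n → Finset V}
    (hTR : Disjoint T R) (hTK : Disjoint T K) (hRK : Disjoint R K)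
    (hA : IsEF1 (fun _ => fun S => (weightedCard T R K S : ℝ)) A) (i j : Fin n) :
    weightedCard T R K (A j) ≤ weightedCard T R K (A i) + 2 := by
  rcases hA i j with h | ⟨x, hx, h⟩ <;> dsimp only at h
  · have h' : weightedCard T R K (A j) ≤ weightedCard T R K (A i) := by exact_mod_cast h
    omega
  · have h' : weightedCard T R K ((A j).erase x) ≤ weightedCard T R K (A i) := by
      exact_mod_cast h
    have hsplit := weightedCard_eq_sum T R K (A j)
    rw [← add_sum_erase _ _ hx, ← weightedCard_eq_sum] at hsplit
    have := weightedCard_singleton_le_two hTR hTK hRK x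
    omega

end WeightedCard

theorem not_isEF1_weightedCard {V : Type*} [DecidableEq V] {T R K : Finset V} {n : ℕ}
    {A : Fin n → Finset V} (hA : ∀ x, ∃! i, x ∈ A i)
    (hTR : Disjoint T R) (hTK : Disjoint T K) (hRK : Disjoint R K)
    (hK : #K + 2 * #T < 2 * n) (hR : n < #R)
    (hpiece : ∀ i, Disjoint (A i) T → 1 < #(A i ∩ R) → #(A i ∩ R) ≤ #(A i ∩ K)) :
    ¬ IsEF1 (fun _ => fun S => (weightedCard T R K S : ℝ)) A := by
  intro hEF
  set v := weightedCard T R K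
  set F : Finset (Fin n) := {i | Disjoint (A i) T}
  have hF : #F + #{i | ¬ Disjoint (A i) T} = n := by
    rw [card_filter_add_card_filter_not, card_univ, Fintype.card_fin]
  have hFc := card_filter_not_disjoint_le hA T
  obtain ⟨i₀, -, hmin⟩ := F.exists_min_image (fun i => v (A i)) (card_pos.mp (by omega))
  have hv (j) : v (A j) = 2 * #(A j ∩ T) + 2 * #(A j ∩ R) + #(A j ∩ K) := rfl
  have hv_free (j) (hj : j ∈ F) : v (A j) = 2 * #(A j ∩ R) + #(A j ∩ K) := by
    simp [hv, disjoint_iff_inter_eq_empty.mp (mem_filter.mp hj).2]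
  have hle (j) : v (A j) ≤ v (A i₀) + 2 :=
    weightedCard_le_add_two_of_isEF1 hTR hTK hRK hEF i₀ j
  rcases le_or_gt (v (A i₀)) 3 with hsmall | hlarge
  · have hrep (j) : #(A j ∩ R) ≤ 1 := by
      have hj := hle j
      by_cases hjF : j ∈ F
      · have := hpiece j (mem_filter.mp hjF).2
        rw [hv_free j hjF] at hj
        omega
      · have hT : 0 < #(A j ∩ T) :=
          card_pos.mpr (not_disjoint_iff_nonempty_inter.mp (by simpa [F] using hjF))
        rw [hv j] at hj
        omega
    have := card_le_of_forall_card_inter_le_one hA hrep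
    omega
  · have hcontact (j) (hjF : j ∈ F) : 2 ≤ #(A j ∩ K) := by
      have := hpiece j (mem_filter.mp hjF).2
      have hup := hle j
      have hlow := hmin j hjF
      rw [hv_free j hjF] at hup hlow
      omega
    have := mul_card_le_of_forall_le_card_inter hA hcontact
    omega

namespace GenCutset

variable {V : Type*} {G : SimpleGraph V} (cs : GenCutset G)

abbrev Touches (x : V) (j : Fin (cs.valence + cs.r)) : Prop := ∃ z ∈ cs.H j, G.Adj x z

noncomputable def rep (j : Fin (cs.valence + cs.r)) : V := (cs.H_nonempty j).choose

theorem rep_mem_H_iff {j k : Fin (cs.valence + cs.r)} : cs.rep k ∈ cs.H j ↔ k = j := by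
  refine ⟨fun h => ?_, fun h => h ▸ (cs.H_nonempty k).choose_spec⟩
  by_contra hkj
  exact disjoint_left.mp (cs.H_disjoint k j hkj) (cs.H_nonempty k).choose_spec h

theorem rep_injective : Function.Injective cs.rep := by
  intro j k h
  rw [← cs.rep_mem_H_iff, h, cs.rep_mem_H_iff]

theorem rep_notMem_C (j : Fin (cs.valence + cs.r)) (i : Fin cs.t) : cs.rep j ∉ cs.C i :=
  (cs.H_partition _).mpr ⟨j, cs.rep_mem_H_iff.mpr rfl⟩ i

theorem exists_mem_C_of_adj {a b : V} {j : Fin (cs.valence + cs.r)} (ha : a ∈ cs.H j)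
    (hab : G.Adj a b) (hb : b ∉ cs.H j) : ∃ i, b ∈ cs.C i := by
  by_contra! h
  obtain ⟨k, hk⟩ := (cs.H_partition b).mp h
  exact cs.H_independent k j (fun hkj => hb (hkj ▸ hk)) b hk a ha hab.symm

open Classical in
noncomputable def contactsOf (i : Fin cs.t) : Finset V := {x ∈ cs.C i | ∃ j, cs.Touches x j}

open Classical in
theorem mem_contactsOf {i : Fin cs.t} {x : V} :
    x ∈ cs.contactsOf i ↔ x ∈ cs.C i ∧ ∃ j, cs.Touches x j :=
  mem_filter

theorem card_contactsOf_le {i : Fin cs.t} (hi : 1 < #(cs.C i)) :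
    #(cs.contactsOf i) ≤ 2 * cs.τ i + 1 := by
  obtain ⟨⟨S, hS, hSmem⟩, -⟩ := cs.typeII_contacts i hi
  rw [← hS]
  apply card_le_card_of_forall_subsingleton cs.Touches
  · intro x hx
    obtain ⟨hxC, j, hj⟩ := cs.mem_contactsOf.mp hx
    exact ⟨j, (hSmem j).mpr ⟨x, hxC, hj⟩, hj⟩
  · intro j _ x hx y hy
    exact cs.contact_unique i j x (cs.mem_contactsOf.mp hx.1).1 y (cs.mem_contactsOf.mp hy.1).1
      hx.2 hy.2

variable [DecidableEq V]

noncomputable def reps : Finset V := univ.image cs.rep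

def typeIVerts : Finset V := (univ.filter fun i => ¬ 1 < #(cs.C i)).biUnion cs.C

noncomputable def contacts : Finset V := (univ.filter fun i => 1 < #(cs.C i)).biUnion cs.contactsOf

theorem card_reps : #cs.reps = cs.valence + cs.r := by
  rw [reps, card_image_of_injective _ cs.rep_injective, card_univ, Fintype.card_fin]

theorem mem_typeIVerts {x : V} :
    x ∈ cs.typeIVerts ↔ ∃ i, ¬ 1 < #(cs.C i) ∧ x ∈ cs.C i := by
  simp [typeIVerts]

theorem mem_contacts {x : V} :
    x ∈ cs.contacts ↔ ∃ i, 1 < #(cs.C i) ∧ x ∈ cs.C i ∧ ∃ j, cs.Touches x j := by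
  simp only [contacts, mem_biUnion, mem_filter, mem_univ, true_and, mem_contactsOf]

theorem disjoint_typeIVerts_reps : Disjoint cs.typeIVerts cs.reps := by
  refine disjoint_left.mpr fun x hx hx' => ?_
  obtain ⟨i, -, hxC⟩ := cs.mem_typeIVerts.mp hx
  obtain ⟨j, -, rfl⟩ := mem_image.mp hx'
  exact cs.rep_notMem_C j i hxC

theorem disjoint_typeIVerts_contacts : Disjoint cs.typeIVerts cs.contacts := by
  refine disjoint_left.mpr fun x hx hx' => ?_
  obtain ⟨i, hi, hxC⟩ := cs.mem_typeIVerts.mp hx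
  obtain ⟨i', hi', hxC', -⟩ := cs.mem_contacts.mp hx'
  have hii' : i ≠ i' := by rintro rfl; exact hi hi'
  exact disjoint_left.mp (cs.C_disjoint i i' hii') hxC hxC'

theorem disjoint_reps_contacts : Disjoint cs.reps cs.contacts := by
  refine disjoint_left.mpr fun x hx hx' => ?_
  obtain ⟨j, -, rfl⟩ := mem_image.mp hx
  obtain ⟨i, -, hxC, -⟩ := cs.mem_contacts.mp hx'
  exact cs.rep_notMem_C j i hxC

theorem card_typeIVerts_le : #cs.typeIVerts ≤ ∑ i with ¬ 1 < #(cs.C i), cs.τ i := by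
  refine card_biUnion_le.trans (sum_le_sum fun i hi => ?_)
  have hCi : #(cs.C i) = 1 :=
    le_antisymm (not_lt.mp (mem_filter.mp hi).2) (cs.C_nonempty i).card_pos
  rw [hCi, cs.typeI_tau i hCi]

theorem card_contacts_le (htame : cs.Tame) :
    #cs.contacts ≤ 2 * ∑ i with 1 < #(cs.C i), cs.τ i + 1 := by
  have hII : #{i | 1 < #(cs.C i)} ≤ 1 :=
    card_le_one.mpr fun i hi i' hi' => htame i i' (mem_filter.mp hi).2 (mem_filter.mp hi').2
  calc #cs.contacts ≤ ∑ i with 1 < #(cs.C i), #(cs.contactsOf i) := card_biUnion_le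
    _ ≤ ∑ i with 1 < #(cs.C i), (2 * cs.τ i + 1) :=
      sum_le_sum fun i hi => cs.card_contactsOf_le (mem_filter.mp hi).2
    _ ≤ 2 * ∑ i with 1 < #(cs.C i), cs.τ i + 1 := by
      rw [sum_add_distrib, ← mul_sum, sum_const, smul_eq_mul, mul_one]
      omega

theorem card_contacts_add_two_mul_card_typeIVerts_le (htame : cs.Tame) :
    #cs.contacts + 2 * #cs.typeIVerts ≤ 2 * cs.valence + 1 := by
  have : _ = cs.valence := sum_filter_add_sum_filter_not univ (fun i => 1 < #(cs.C i)) cs.τ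
  have := cs.card_contacts_le htame
  have := cs.card_typeIVerts_le
  omega

theorem exists_contact_touching {S : Finset V} (hS : (G.induce (S : Set V)).Connected)
    (hST : Disjoint S cs.typeIVerts) {j k : Fin (cs.valence + cs.r)} (hj : cs.rep j ∈ S)
    (hk : cs.rep k ∈ S) (hjk : j ≠ k) : ∃ b ∈ S ∩ cs.contacts, cs.Touches b j := by
  obtain ⟨a, -, ha, b, hbS, hb, hab⟩ := hS.exists_adj_of_induce (P := cs.H j) hj
    (cs.rep_mem_H_iff.mpr rfl) hk fun h => hjk (cs.rep_mem_H_iff.mp h).symm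
  obtain ⟨i, hbC⟩ := cs.exists_mem_C_of_adj ha hab hb
  have hi : 1 < #(cs.C i) := by
    by_contra hi
    exact disjoint_left.mp hST hbS (cs.mem_typeIVerts.mpr ⟨i, hi, hbC⟩)
  exact ⟨b, mem_inter.mpr ⟨hbS, cs.mem_contacts.mpr ⟨i, hi, hbC, j, a, ha, hab.symm⟩⟩,
    a, ha, hab.symm⟩

theorem card_inter_reps_le_card_inter_contacts {S : Finset V} (hS : ConnPiece G S)
    (hST : Disjoint S cs.typeIVerts) (hR : 1 < #(S ∩ cs.reps)) :
    #(S ∩ cs.reps) ≤ #(S ∩ cs.contacts) := by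
  have hconn : (G.induce (S : Set V)).Connected :=
    hS.resolve_left (by rintro rfl; simp at hR)
  apply card_le_card_of_forall_subsingleton fun x b => ∃ j, x = cs.rep j ∧ cs.Touches b j
  · intro x hx
    obtain ⟨hxS, hx⟩ := mem_inter.mp hx
    obtain ⟨j, -, rfl⟩ := mem_image.mp hx
    obtain ⟨y, hy, hyx⟩ := exists_mem_ne hR (cs.rep j)
    obtain ⟨hyS, hy⟩ := mem_inter.mp hy
    obtain ⟨k, -, rfl⟩ := mem_image.mp hy
    obtain ⟨b, hb, hbj⟩ := cs.exists_contact_touching hconn hST hxS hyS fun h => hyx (h ▸ rfl)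
    exact ⟨b, hb, j, rfl, hbj⟩
  · rintro b hb x ⟨-, j, rfl, hj⟩ y ⟨-, k, rfl, hk⟩
    obtain ⟨i, hi, hbC, -⟩ := cs.mem_contacts.mp (mem_inter.mp hb).2
    rw [(cs.typeII_contacts i hi).2 b hbC j k hj hk]

end GenCutset

theorem tame_cutset_blocks_EF1_additive_general {V : Type*} [DecidableEq V]
    (G : SimpleGraph V) (cs : GenCutset G) (htame : cs.Tame)
    (n : ℕ) (hn₁ : cs.valence < n) (hn₂ : n < cs.valence + cs.r) :
    ∃ v : Finset V → ℝ, IsAdditiveVal v ∧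
      ∀ A : Fin n → Finset V, IsConnAlloc G A →
        ¬ IsEF1 (fun _ : Fin n => v) A ∧ ¬ IsEF1Outer G (fun _ : Fin n => v) A := by
  refine ⟨fun S => (weightedCard cs.typeIVerts cs.reps cs.contacts S : ℝ),
    isAdditiveVal_weightedCard _ _ _, fun A hA => ?_⟩
  have hK := cs.card_contacts_add_two_mul_card_typeIVerts_le htame
  have hR := cs.card_reps
  have hEF1 : ¬ IsEF1 _ A := not_isEF1_weightedCard hA.1 cs.disjoint_typeIVerts_reps
    cs.disjoint_typeIVerts_contacts cs.disjoint_reps_contacts (by omega) (by omega)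
    fun i hi => cs.card_inter_reps_le_card_inter_contacts (hA.2 i) hi
  exact ⟨hEF1, fun h => hEF1 h.isEF1⟩

/-- A tame generalized cutset blocks connected EF1 (hence EF1-outer) allocations,
for each number of agents `n` in the critical interval, under some common additive valuation. -/
theorem tame_cutset_blocks_EF1_additive {V : Type*} [Fintype V] [DecidableEq V]
    (G : SimpleGraph V) (hG : G.Connected) (cs : GenCutset G) (htame : cs.Tame)
    (n : ℕ) (hn₁ : cs.valence < n) (hn₂ : n < cs.valence + cs.r) :
    ∃ v : Finset V → ℝ, IsAdditiveVal v ∧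
      ∀ A : Fin n → Finset V, IsConnAlloc G A →
        ¬ IsEF1 (fun _ : Fin n => v) A ∧ ¬ IsEF1Outer G (fun _ : Fin n => v) A :=
  tame_cutset_blocks_EF1_additive_general G cs htame n hn₁ hn₂
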